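/- arXiv:1911.00793 — 3 statements merged into one kernel-verified Lean document; each statement's English description precedes it below -/
import Mathlib

section
/- Let G be a countable commutative group acting on a measurable space X such that for each g ∈ G the map x ↦ g·x is measurable and the set {x ∈ X : g·x = x} is measurable. Let μ be a probability measure on X such that the action of each g ∈ G is measure-preserving, and assume the action is ergodic in the sense that every measurable set s ⊆ X satisfying g·s = s for all g ∈ G has μ(s) = 0 or μ(s) = 1. Then there exists a subgroup H of G such that for μ-almost every x ∈ X the stabilizer {g ∈ G : g·x = x} equals H. -/
/-!
Every fixed-point set `{x | g • x = x}` is invariant under the commuting action, so by ergodicity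
it is either null or conull. Hence `g` fixes almost every point or almost no point, and the `g` of
the first kind form a subgroup `H`. As `G` is countable, almost every `x` sees the dichotomy for
all `g` at once, and then its stabilizer is exactly `H`.
-/

open MeasureTheory Filter MulAction

theorem eventuallyConst_ae_of_measure_eq_zero_or_one {X : Type*}
    [MeasurableSpace X] {μ : Measure X} [IsProbabilityMeasure μ] {s : Set X}
    (hs : MeasurableSet s) (h : μ s = 0 ∨ μ s = 1) : EventuallyConst s (ae μ) :=
  eventuallyConst_set.2 <| h.symm.imp (mem_ae_iff_prob_eq_one hs).2 measure_eq_zero_iff_ae_notMem.1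

section

variable {G X : Type*} [Group G] [MulAction G X] [MeasurableSpace X] (μ : Measure X)

def aeFixingSubgroup : Subgroup G where
  carrier := {g | ∀ᵐ x ∂μ, g • x = x}
  one_mem' := ae_of_all μ fun x => one_smul G x
  mul_mem' {a b} ha hb := by
    change ∀ᵐ x ∂μ, (a * b) • x = x
    filter_upwards [ha, hb] with x ha hb
    rw [mul_smul, hb, ha]
  inv_mem' {a} ha := by
    change ∀ᵐ x ∂μ, a⁻¹ • x = x
    filter_upwards [ha] with x hx
    rw [inv_smul_eq_iff, hx]

variable {μ}

theorem mem_aeFixingSubgroup {g : G} : g ∈ aeFixingSubgroup μ ↔ ∀ᵐ x ∂μ, g • x = x :=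
  Iff.rfl

theorem ae_mem_aeFixingSubgroup_iff_smul_eq [NeZero μ] {g : G}
    (hg : EventuallyConst (fixedBy X g) (ae μ)) :
    ∀ᵐ x ∂μ, (g ∈ aeFixingSubgroup μ ↔ g • x = x) := by
  rcases eventuallyConst_set.1 hg with hfixed | hmoved
  · filter_upwards [hfixed] with x hx
    exact iff_of_true hfixed hx
  · have hnot : g ∉ aeFixingSubgroup μ := fun hmem =>
      let ⟨_, hfix, hmove⟩ := ((mem_aeFixingSubgroup.1 hmem).and hmoved).exists
      hmove hfix
    filter_upwards [hmoved] with x hx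
    exact iff_of_false hnot hx

theorem ae_stabilizer_eq_aeFixingSubgroup [NeZero μ] [Countable G]
    (h : ∀ g : G, EventuallyConst (fixedBy X g) (ae μ)) :
    ∀ᵐ x ∂μ, stabilizer G x = aeFixingSubgroup μ := by
  filter_upwards [ae_all_iff.2 fun g => ae_mem_aeFixingSubgroup_iff_smul_eq (h g)] with x hx
  ext g
  exact (hx g).symm

end

theorem exists_subgroup_ae_stabilizer_eq_general
    {G X : Type*} [CommGroup G] [Countable G] [MeasurableSpace X] [MulAction G X]
    (hfix : ∀ g : G, MeasurableSet {x : X | g • x = x})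
    (μ : Measure X) [IsProbabilityMeasure μ]
    (herg : ∀ s : Set X, MeasurableSet s → (∀ g : G, (fun x : X => g • x) '' s = s) →
      μ s = 0 ∨ μ s = 1) :
    ∃ H : Subgroup G, ∀ᵐ x ∂μ, MulAction.stabilizer G x = H := by
  have hinvariant (g h : G) : (fun x : X => h • x) '' fixedBy X g = fixedBy X g := by
    rw [Set.image_smul]
    exact fixedBy_mem_fixedBy_of_commute (Commute.all g h)
  refine ⟨aeFixingSubgroup μ, ae_stabilizer_eq_aeFixingSubgroup fun g => ?_⟩
  exact eventuallyConst_ae_of_measure_eq_zero_or_one (hfix g) (herg _ (hfix g) (hinvariant g))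

/-- For an ergodic measure-preserving action of a countable commutative group `G` on a
probability space `(X, μ)`, there is a single subgroup `H` of `G` that equals the
stabilizer of `x` for `μ`-almost every `x`. -/
theorem exists_subgroup_ae_stabilizer_eq
    {G X : Type*} [CommGroup G] [Countable G] [MeasurableSpace X] [MulAction G X]
    (hmeas : ∀ g : G, Measurable fun x : X => g • x)
    (hfix : ∀ g : G, MeasurableSet {x : X | g • x = x})
    (μ : Measure X) [IsProbabilityMeasure μ]
    (hpres : ∀ g : G, MeasurePreserving (fun x : X => g • x) μ μ)
    (herg : ∀ s : Set X, MeasurableSet s → (∀ g : G, (fun x : X => g • x) '' s = s) →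
      μ s = 0 ∨ μ s = 1) :
    ∃ H : Subgroup G, ∀ᵐ x ∂μ, MulAction.stabilizer G x = H :=
  exists_subgroup_ae_stabilizer_eq_general hfix μ herg
end

section
/- Let K be a number field with ring of integers R, let 𝔞 be a nonzero ideal of R, and let u be a unit of R with u ≠ 1. Then the set of additive characters χ : 𝔞 → 𝕋 of the additive group of 𝔞 with values in the circle group 𝕋 that satisfy χ(u·x) = χ(x) for all x ∈ 𝔞 is finite. -/
open scoped NumberField

/-!
A character fixed by `u` kills `(u - 1) • 𝔞`, so it factors through `𝔞 ⧸ (u - 1) • 𝔞`.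
That quotient is `(𝓞 K ⧸ (u - 1)) ⊗ 𝔞`, finite because `𝓞 K ⧸ (u - 1)` is finite for `u ≠ 1`
and `𝔞` is finitely generated; a finite group has only finitely many characters.
-/

namespace AddChar

variable {G M : Type*} [AddCommGroup G] [CommMonoid M]

theorem finite_setOf_forall_mem_eq_one (H : AddSubgroup G) [Finite (AddChar (G ⧸ H) M)] :
    {χ : AddChar G M | ∀ x ∈ H, χ x = 1}.Finite := by
  refine (Set.finite_range fun ψ : AddChar (G ⧸ H) M ↦
    ψ.compAddMonoidHom (QuotientAddGroup.mk' H)).subset fun χ hχ ↦ ?_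
  refine ⟨toAddMonoidHomEquiv.symm
    (QuotientAddGroup.lift H (toAddMonoidHomEquiv χ) fun x hx ↦ ?_), rfl⟩
  simp [hχ x hx]

theorem eq_one_of_mem_span_sub_one_smul_top {R A : Type*} [CommRing R] [Module R G]
    [CommGroup A] {r : R} {χ : AddChar G A} (hχ : ∀ x : G, χ (r • x) = χ x) {x : G}
    (hx : x ∈ Ideal.span {r - 1} • (⊤ : Submodule R G)) : χ x = 1 := by
  rw [Submodule.ideal_span_singleton_smul, Submodule.mem_smul_pointwise_iff_exists] at hx
  obtain ⟨y, -, rfl⟩ := hx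
  rw [sub_smul, one_smul, map_sub_eq_div, hχ, div_self']

end AddChar

theorem finite_unit_fixed_addChars_general
    (K : Type*) [Field K] [NumberField K]
    (𝔞 : Ideal (𝓞 K)) (u : (𝓞 K)ˣ) (hu : u ≠ 1) :
    {χ : AddChar 𝔞 Circle |
      ∀ x : 𝔞, χ ⟨(u : 𝓞 K) * (x : 𝓞 K), Ideal.mul_mem_left 𝔞 (u : 𝓞 K) x.2⟩ = χ x}.Finite := by
  set I : Ideal (𝓞 K) := Ideal.span {(u : 𝓞 K) - 1}
  have : Finite (𝓞 K ⧸ I) := I.finiteQuotientOfFreeOfNeBot <| by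
    simpa [I, Ideal.span_singleton_eq_bot, sub_eq_zero] using hu
  set N : Submodule (𝓞 K) 𝔞 := I • ⊤
  have : Finite (𝔞 ⧸ N.toAddSubgroup) := Submodule.finite_quotient_smul I Module.Finite.fg_top
  have : Finite (AddChar (𝔞 ⧸ N.toAddSubgroup) Circle) :=
    .of_equiv _ AddChar.circleEquivComplex.symm.toEquiv
  exact (AddChar.finite_setOf_forall_mem_eq_one N.toAddSubgroup).subset fun χ hχ x hx ↦
    AddChar.eq_one_of_mem_span_sub_one_smul_top (r := (u : 𝓞 K)) hχ hx

/-- If `R` is the ring of integers of a number field `K`, `𝔞` is a nonzero ideal of `R`, and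
`u` is a unit of `R` with `u ≠ 1`, then there are only finitely many additive characters
`χ : 𝔞 → 𝕋` of the additive group of `𝔞` with values in the circle group satisfying
`χ (u • x) = χ x` for all `x ∈ 𝔞`. -/
theorem finite_unit_fixed_addChars
    (K : Type*) [Field K] [NumberField K]
    (𝔞 : Ideal (𝓞 K)) (h𝔞 : 𝔞 ≠ 0) (u : (𝓞 K)ˣ) (hu : u ≠ 1) :
    {χ : AddChar 𝔞 Circle |
      ∀ x : 𝔞, χ ⟨(u : 𝓞 K) * (x : 𝓞 K), Ideal.mul_mem_left 𝔞 (u : 𝓞 K) x.2⟩ = χ x}.Finite :=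
  finite_unit_fixed_addChars_general K 𝔞 u hu
end

section
/- Let λ, μ : ℕ → ℝ be strictly increasing sequences, let a, b : ℕ → ℝ satisfy a(n) > 0 and b(n) > 0 for all n, and let s₀ ∈ ℝ be such that the series Σ_n a(n)·exp(−s₀·λ(n)) and Σ_n b(n)·exp(−s₀·μ(n)) are both summable. If Σ_n a(n)·exp(−s·λ(n)) = Σ_n b(n)·exp(−s·μ(n)) for every real s > s₀, then λ = μ and a = b. -/
open Filter Topology

private lemma gds_summable_at (a lam : ℕ → ℝ) (ha : ∀ n, 0 < a n)
    (hle : ∀ n, lam 0 ≤ lam n) {s₀ s : ℝ} (hs : s₀ ≤ s)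
    (hsa : Summable fun n => a n * Real.exp (-s₀ * lam n)) :
    Summable fun n => a n * Real.exp (-s * lam n) := by
  refine Summable.of_nonneg_of_le (fun n => mul_nonneg (ha n).le (Real.exp_nonneg _)) (fun n => ?_)
    (hsa.mul_right (Real.exp (-(s - s₀) * lam 0)))
  have h1 : a n * Real.exp (-s₀ * lam n) * Real.exp (-(s - s₀) * lam 0)
      = a n * Real.exp (-s₀ * lam n + -(s - s₀) * lam 0) := by
    rw [Real.exp_add]; ring
  rw [h1]
  refine mul_le_mul_of_nonneg_left (Real.exp_le_exp.2 ?_) (ha n).le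
  nlinarith [hle n]

private lemma gds_tendsto_head (a lam : ℕ → ℝ) (ha : ∀ n, 0 < a n)
    (hlam : StrictMono lam) (s₀ : ℝ)
    (hsa : Summable fun n => a n * Real.exp (-s₀ * lam n)) :
    Tendsto (fun s => Real.exp (s * lam 0) * ∑' n, a n * Real.exp (-s * lam n))
      atTop (𝓝 (a 0)) := by
  have hle : ∀ n, lam 0 ≤ lam n := fun n => hlam.monotone (Nat.zero_le n)
  set d : ℝ := lam 1 - lam 0 with hd_def
  have hd : 0 < d := sub_pos.2 (hlam Nat.zero_lt_one)
  have key : ∀ s : ℝ, s₀ ≤ s → Summable (fun n => a n * Real.exp (-s * lam n)) :=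
    fun s hs => gds_summable_at a lam ha hle hs hsa
  have keyS : ∀ s : ℝ, s₀ ≤ s →
      Summable (fun n => a n * Real.exp (-s * (lam n - lam 0))) := by
    intro s hs
    refine ((key s hs).mul_right (Real.exp (s * lam 0))).congr fun n => ?_
    rw [mul_assoc, ← Real.exp_add]; ring_nf
  have keyT : ∀ s : ℝ, s₀ ≤ s →
      Summable (fun n => a (n+1) * Real.exp (-s * (lam (n+1) - lam 0))) := by
    intro s hs
    exact (summable_nat_add_iff 1).2 (keyS s hs)
  set T : ℝ → ℝ := fun s => ∑' n, a (n+1) * Real.exp (-s * (lam (n+1) - lam 0)) with hT_def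
  have hsplit : ∀ s : ℝ, s₀ ≤ s →
      Real.exp (s * lam 0) * ∑' n, a n * Real.exp (-s * lam n) = a 0 + T s := by
    intro s hs
    rw [← tsum_mul_left]
    have h1 : (fun n => Real.exp (s * lam 0) * (a n * Real.exp (-s * lam n)))
        = fun n => a n * Real.exp (-s * (lam n - lam 0)) := by
      funext n
      rw [← mul_assoc, mul_comm (Real.exp _) (a n), mul_assoc, ← Real.exp_add]
      ring_nf
    rw [h1, Summable.tsum_eq_zero_add (keyS s hs)]
    simp [hT_def]
  have hTnonneg : ∀ s : ℝ, 0 ≤ T s := fun s => tsum_nonneg (fun n => mul_nonneg (ha _).le (Real.exp_nonneg _))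
  have hTle : ∀ s : ℝ, s₀ ≤ s → T s ≤ T s₀ * Real.exp (-(s - s₀) * d) := by
    intro s hs
    have hbd : ∀ n, a (n+1) * Real.exp (-s * (lam (n+1) - lam 0))
        ≤ a (n+1) * Real.exp (-s₀ * (lam (n+1) - lam 0)) * Real.exp (-(s - s₀) * d) := by
      intro n
      have h2 : a (n+1) * Real.exp (-s₀ * (lam (n+1) - lam 0)) * Real.exp (-(s - s₀) * d)
          = a (n+1) * Real.exp (-s₀ * (lam (n+1) - lam 0) + -(s - s₀) * d) := by
        rw [Real.exp_add]; ring
      rw [h2]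
      refine mul_le_mul_of_nonneg_left (Real.exp_le_exp.2 ?_) (ha _).le
      have h3 : d ≤ lam (n+1) - lam 0 := by
        have := hlam.monotone (Nat.one_le_iff_ne_zero.2 (Nat.succ_ne_zero n))
        simp only [hd_def]; linarith
      nlinarith
    calc T s ≤ ∑' n, a (n+1) * Real.exp (-s₀ * (lam (n+1) - lam 0)) * Real.exp (-(s - s₀) * d) :=
          Summable.tsum_le_tsum hbd (keyT s hs) ((keyT s₀ le_rfl).mul_right _)
      _ = T s₀ * Real.exp (-(s - s₀) * d) := tsum_mul_right
  have hg0 : Tendsto (fun s : ℝ => T s₀ * Real.exp (-(s - s₀) * d)) atTop (𝓝 0) := by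
    have h1 : Tendsto (fun s : ℝ => -(s - s₀) * d) atTop atBot := by
      have h2 : Tendsto (fun s : ℝ => s - s₀) atTop atTop :=
        tendsto_atTop_add_const_right _ (-s₀) tendsto_id
      have h3 : Tendsto (fun s : ℝ => (s - s₀) * d) atTop atTop := h2.atTop_mul_const hd
      exact (tendsto_neg_atTop_atBot.comp h3).congr fun s => by simp only [Function.comp_apply]; ring
    have := (Real.tendsto_exp_atBot.comp h1).const_mul (T s₀)
    simpa using this
  have hT0 : Tendsto T atTop (𝓝 0) := by
    refine squeeze_zero' (Eventually.of_forall hTnonneg)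
      ((eventually_ge_atTop s₀).mono fun s hs => hTle s hs) hg0
  have hlim : Tendsto (fun s => a 0 + T s) atTop (𝓝 (a 0)) := by
    simpa using tendsto_const_nhds.add hT0
  refine hlim.congr' ?_
  exact (eventually_ge_atTop s₀).mono fun s hs => (hsplit s hs).symm

private lemma gds_head_le (lam mu a b : ℕ → ℝ) (hlam : StrictMono lam) (hmu : StrictMono mu)
    (ha : ∀ n, 0 < a n) (hb : ∀ n, 0 < b n) (s₀ : ℝ)
    (hsa : Summable fun n => a n * Real.exp (-s₀ * lam n))
    (hsb : Summable fun n => b n * Real.exp (-s₀ * mu n))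
    (heq : ∀ s : ℝ, s₀ < s →
      (∑' n, a n * Real.exp (-s * lam n)) = ∑' n, b n * Real.exp (-s * mu n)) :
    lam 0 ≤ mu 0 := by
  by_contra h
  push_neg at h
  have hA := gds_tendsto_head a lam ha hlam s₀ hsa
  have hB := gds_tendsto_head b mu hb hmu s₀ hsb
  -- exp (s * mu 0) * Fa s → 0
  have h1 : Tendsto (fun s : ℝ => Real.exp (s * (mu 0 - lam 0))) atTop (𝓝 0) := by
    apply Real.tendsto_exp_atBot.comp
    have h2 : Tendsto (fun s : ℝ => s * (lam 0 - mu 0)) atTop atTop :=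
      tendsto_id.atTop_mul_const (by linarith)
    refine (tendsto_neg_atTop_atBot.comp h2).congr fun s => ?_
    simp only [Function.comp_apply]; ring
  have hA0 : Tendsto (fun s : ℝ => Real.exp (s * mu 0) * ∑' n, a n * Real.exp (-s * lam n))
      atTop (𝓝 0) := by
    have := h1.mul hA
    simp only [zero_mul] at this
    refine this.congr fun s => ?_
    have h4 : s * (mu 0 - lam 0) + s * lam 0 = s * mu 0 := by ring
    rw [← mul_assoc, ← Real.exp_add, h4]
  have hEq : (fun s : ℝ => Real.exp (s * mu 0) * ∑' n, a n * Real.exp (-s * lam n)) =ᶠ[atTop]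
      (fun s : ℝ => Real.exp (s * mu 0) * ∑' n, b n * Real.exp (-s * mu n)) :=
    (eventually_gt_atTop s₀).mono fun s hs => by dsimp only; rw [heq s hs]
  have : (0 : ℝ) = b 0 := tendsto_nhds_unique (hA0.congr' hEq) hB
  exact absurd this.symm (hb 0).ne'

private lemma gds_head_eq (lam mu a b : ℕ → ℝ) (hlam : StrictMono lam) (hmu : StrictMono mu)
    (ha : ∀ n, 0 < a n) (hb : ∀ n, 0 < b n) (s₀ : ℝ)
    (hsa : Summable fun n => a n * Real.exp (-s₀ * lam n))
    (hsb : Summable fun n => b n * Real.exp (-s₀ * mu n))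
    (heq : ∀ s : ℝ, s₀ < s →
      (∑' n, a n * Real.exp (-s * lam n)) = ∑' n, b n * Real.exp (-s * mu n)) :
    lam 0 = mu 0 ∧ a 0 = b 0 := by
  have h1 := gds_head_le lam mu a b hlam hmu ha hb s₀ hsa hsb heq
  have h2 := gds_head_le mu lam b a hmu hlam hb ha s₀ hsb hsa
    (fun s hs => (heq s hs).symm)
  have h0 : lam 0 = mu 0 := le_antisymm h1 h2
  have hA := gds_tendsto_head a lam ha hlam s₀ hsa
  have hB := gds_tendsto_head b mu hb hmu s₀ hsb
  rw [← h0] at hB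
  have hEq : (fun s : ℝ => Real.exp (s * lam 0) * ∑' n, a n * Real.exp (-s * lam n)) =ᶠ[atTop]
      (fun s : ℝ => Real.exp (s * lam 0) * ∑' n, b n * Real.exp (-s * mu n)) :=
    (eventually_gt_atTop s₀).mono fun s hs => by dsimp only; rw [heq s hs]
  exact ⟨h0, tendsto_nhds_unique (hA.congr' hEq) hB⟩

private lemma gds_all_eq : ∀ (N : ℕ) (lam mu a b : ℕ → ℝ), StrictMono lam → StrictMono mu →
    (∀ n, 0 < a n) → (∀ n, 0 < b n) → ∀ s₀ : ℝ,
    Summable (fun n => a n * Real.exp (-s₀ * lam n)) →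
    Summable (fun n => b n * Real.exp (-s₀ * mu n)) →
    (∀ s : ℝ, s₀ < s →
      (∑' n, a n * Real.exp (-s * lam n)) = ∑' n, b n * Real.exp (-s * mu n)) →
    lam N = mu N ∧ a N = b N := by
  intro N
  induction N with
  | zero =>
    intro lam mu a b hlam hmu ha hb s₀ hsa hsb heq
    exact gds_head_eq lam mu a b hlam hmu ha hb s₀ hsa hsb heq
  | succ N ih =>
    intro lam mu a b hlam hmu ha hb s₀ hsa hsb heq
    obtain ⟨h0, h0'⟩ := gds_head_eq lam mu a b hlam hmu ha hb s₀ hsa hsb heq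
    refine ih (fun k => lam (k+1)) (fun k => mu (k+1)) (fun k => a (k+1)) (fun k => b (k+1))
      (fun x y h => hlam (by omega)) (fun x y h => hmu (by omega))
      (fun n => ha _) (fun n => hb _) s₀
      ((summable_nat_add_iff (f := fun n => a n * Real.exp (-s₀ * lam n)) 1).2 hsa)
      ((summable_nat_add_iff (f := fun n => b n * Real.exp (-s₀ * mu n)) 1).2 hsb)
      (fun s hs => ?_)
    have hsa' : Summable fun n => a n * Real.exp (-s * lam n) :=
      gds_summable_at a lam ha (fun n => hlam.monotone (Nat.zero_le n)) hs.le hsa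
    have hsb' : Summable fun n => b n * Real.exp (-s * mu n) :=
      gds_summable_at b mu hb (fun n => hmu.monotone (Nat.zero_le n)) hs.le hsb
    have e1 := Summable.tsum_eq_zero_add hsa'
    have e2 := Summable.tsum_eq_zero_add hsb'
    have e3 := heq s hs
    rw [e1, e2, h0, h0'] at e3
    linarith

/-- Uniqueness of generalized Dirichlet series expansions: if two series
`Σ_n a n * exp (-s * lam n)` and `Σ_n b n * exp (-s * mu n)` with strictly increasing real
exponents and positive coefficients are summable at some `s₀` and agree for all real
`s > s₀`, then the exponents and the coefficients coincide. -/
theorem generalized_dirichlet_series_unique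
    (lam mu : ℕ → ℝ) (hlam : StrictMono lam) (hmu : StrictMono mu)
    (a b : ℕ → ℝ) (ha : ∀ n, 0 < a n) (hb : ∀ n, 0 < b n)
    (s₀ : ℝ)
    (hsa : Summable fun n => a n * Real.exp (-s₀ * lam n))
    (hsb : Summable fun n => b n * Real.exp (-s₀ * mu n))
    (heq : ∀ s : ℝ, s₀ < s →
      (∑' n, a n * Real.exp (-s * lam n)) = ∑' n, b n * Real.exp (-s * mu n)) :
    lam = mu ∧ a = b := by
  constructor
  · funext n
    exact (gds_all_eq n lam mu a b hlam hmu ha hb s₀ hsa hsb heq).1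
  · funext n
    exact (gds_all_eq n lam mu a b hlam hmu ha hb s₀ hsa hsb heq).2
end
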